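/- Let d be a positive natural number, let ρ be a density matrix on ℂ² ⊗ ℂ^d, let V be any 2 × 2 unitary matrix, and let σ_z = diag(1, −1). Then the infimum over 2 × 2 unitaries W of ‖ρ − ((W V Wᴴ) ⊗ₖ I_d) ρ ((W V Wᴴ) ⊗ₖ I_d)ᴴ‖₁ is less than or equal to the infimum over 2 × 2 unitaries W of ‖ρ − ((W σ_z Wᴴ) ⊗ₖ I_d) ρ ((W σ_z Wᴴ) ⊗ₖ I_d)ᴴ‖₁. That is, among all local unitary channels on the qubit subsystem with a prescribed spectrum, those with harmonic spectrum {1, −1} yield the largest minimal trace-distance disturbance, and hence the smallest maximal probability of error when discriminating the identity channel from the unitary channel in a quantum reading protocol. -/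

import Mathlib

open Matrix Kronecker
open scoped ComplexOrder

open scoped Classical in
/-- The positive semidefinite square root of a matrix (junk value `0` if not PSD). -/
noncomputable def msqrt {n : Type*} [Fintype n] [DecidableEq n] (A : Matrix n n ℂ) : Matrix n n ℂ :=
  if h : A.PosSemidef then
    (h.1.eigenvectorUnitary : Matrix n n ℂ) * diagonal (((↑) : ℝ → ℂ) ∘ Real.sqrt ∘ h.1.eigenvalues) *
      (star (h.1.eigenvectorUnitary : Matrix n n ℂ))
  else 0

/-- Square-root fidelity `tr √(√ρ · σ · √ρ)` (as a real number). -/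
noncomputable def sqrtFid {n : Type*} [Fintype n] [DecidableEq n] (ρ σ : Matrix n n ℂ) : ℝ :=
  ((msqrt (msqrt ρ * σ * msqrt ρ)).trace).re

/-- Trace norm `tr √(Xᴴ X)` (as a real number). -/
noncomputable def traceNorm {n : Type*} [Fintype n] [DecidableEq n] (X : Matrix n n ℂ) : ℝ :=
  ((msqrt (Xᴴ * X)).trace).re

/-- The Bell-diagonal two-qubit state with Bell-basis eigenvalues `γ₁, γ₂, γ₃, γ₄`. -/
noncomputable def bellDiag (γ₁ γ₂ γ₃ γ₄ : ℝ) :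
    Matrix (Fin 2 × Fin 2) (Fin 2 × Fin 2) ℂ :=
  Matrix.reindex finProdFinEquiv.symm finProdFinEquiv.symm
    ((1 / 2 : ℂ) • !![(γ₁ : ℂ) + γ₂, 0, 0, (γ₁ : ℂ) - γ₂;
        0, (γ₃ : ℂ) + γ₄, (γ₃ : ℂ) - γ₄, 0;
        0, (γ₃ : ℂ) - γ₄, (γ₃ : ℂ) + γ₄, 0;
        (γ₁ : ℂ) - γ₂, 0, 0, (γ₁ : ℂ) + γ₂])


/-!
Diagonalising the qubit unitary through a unit eigenvector gives `Qᴴ V Q = α + β σ_z` with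
`|α|² + |β|² = 1` and `Re (α β̄) = 0`. For any Hermitian involution `S`, the unitary
`U = α + β S` satisfies `ρ - U ρ Uᴴ = β̄ (β + α S) (ρ - S ρ S)`, and `β + α S` is again unitary,
so `‖ρ - U ρ Uᴴ‖₁ = |β| ‖ρ - S ρ S‖₁ ≤ ‖ρ - S ρ S‖₁`. Applied to `S = W σ_z Wᴴ ⊗ I_d`, the
rotation `W Qᴴ` turns `V` into `α + β S`, which bounds the left infimum by every element of the
right-hand set.
-/

open ComplexConjugate

section TraceNorm

variable {n : Type*} [Fintype n] [DecidableEq n]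

lemma msqrt_eq_cfc {A : Matrix n n ℂ} (hA : A.PosSemidef) : msqrt A = cfc Real.sqrt A := by
  rw [msqrt, dif_pos hA, hA.1.cfc_eq]
  rfl

lemma posSemidef_msqrt {A : Matrix n n ℂ} (hA : A.PosSemidef) : (msqrt A).PosSemidef := by
  rw [msqrt, dif_pos hA, star_eq_conjTranspose]
  refine PosSemidef.mul_mul_conjTranspose_same (posSemidef_diagonal_iff.mpr fun i => ?_) _
  exact Complex.zero_le_real.mpr (Real.sqrt_nonneg _)

lemma msqrt_real_smul {A : Matrix n n ℂ} (hA : A.PosSemidef) {r : ℝ} (hr : 0 ≤ r) :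
    msqrt ((r : ℂ) • A) = (√r : ℂ) • msqrt A := by
  have hrA : ((r : ℂ) • A).PosSemidef := hA.smul (Complex.zero_le_real.mpr hr)
  have hcomp := cfc_comp_const_mul r Real.sqrt A (ha := hA.1)
  have hmul := cfc_const_mul (√r) Real.sqrt A
  rw [msqrt_eq_cfc hA, msqrt_eq_cfc hrA, Complex.coe_smul, Complex.coe_smul]
  convert hcomp.symm.trans ((cfc_congr fun x _ => Real.sqrt_mul hr x).trans hmul) using 1

lemma traceNorm_nonneg (X : Matrix n n ℂ) : 0 ≤ traceNorm X :=
  (Complex.nonneg_iff.mp (posSemidef_msqrt (posSemidef_conjTranspose_mul_self X)).trace_nonneg).1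

lemma traceNorm_smul (r : ℂ) (X : Matrix n n ℂ) : traceNorm (r • X) = ‖r‖ * traceNorm X := by
  have h : (r • X)ᴴ * (r • X) = ((‖r‖ ^ 2 : ℝ) : ℂ) • (Xᴴ * X) := by
    rw [conjTranspose_smul, smul_mul_smul_comm, Complex.star_def, mul_comm, Complex.mul_conj',
      Complex.ofReal_pow]
  rw [traceNorm, traceNorm, h,
    msqrt_real_smul (posSemidef_conjTranspose_mul_self X) (by positivity),
    Real.sqrt_sq (norm_nonneg r), trace_smul, smul_eq_mul, Complex.re_ofReal_mul]

lemma traceNorm_unitary_mul {M : Matrix n n ℂ} (hM : Mᴴ * M = 1) (X : Matrix n n ℂ) :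
    traceNorm (M * X) = traceNorm X := by
  rw [traceNorm, traceNorm, conjTranspose_mul, Matrix.mul_assoc, ← Matrix.mul_assoc Mᴴ, hM,
    Matrix.one_mul]

end TraceNorm

def IsHermitianInvolution {n : Type*} [Fintype n] [DecidableEq n] (S : Matrix n n ℂ) : Prop :=
  Sᴴ = S ∧ S * S = 1

local notation "σz" => !![(1 : ℂ), 0; 0, -1]

lemma isHermitianInvolution_pauliZ : IsHermitianInvolution σz := by
  constructor
  · ext i j
    fin_cases i <;> fin_cases j <;> simp
  · simp [one_fin_two]

namespace IsHermitianInvolution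

variable {n : Type*} [Fintype n] [DecidableEq n] {S : Matrix n n ℂ}

lemma unitary_conj (hS : IsHermitianInvolution S) {W : Matrix n n ℂ} (hW : Wᴴ * W = 1) :
    IsHermitianInvolution (W * S * Wᴴ) := by
  constructor
  · rw [conjTranspose_mul, conjTranspose_mul, conjTranspose_conjTranspose, hS.1, Matrix.mul_assoc]
  · simp only [Matrix.mul_assoc]
    rw [← Matrix.mul_assoc Wᴴ, hW, Matrix.one_mul, ← Matrix.mul_assoc S, hS.2, Matrix.one_mul,
      mul_eq_one_comm.mp hW]

lemma kronecker_one (hS : IsHermitianInvolution S) {m : Type*} [Fintype m] [DecidableEq m] :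
    IsHermitianInvolution (S ⊗ₖ (1 : Matrix m m ℂ)) :=
  ⟨by rw [conjTranspose_kronecker, hS.1, conjTranspose_one],
    by rw [← mul_kronecker_mul, hS.2, Matrix.mul_one, one_kronecker_one]⟩

variable {α β : ℂ}

lemma conjTranspose_mul_self_add_smul (hS : IsHermitianInvolution S)
    (hnorm : conj α * α + conj β * β = 1) (horth : α * conj β + conj α * β = 0) :
    (α • 1 + β • S)ᴴ * (α • 1 + β • S) = 1 := by
  simp only [conjTranspose_add, conjTranspose_smul, conjTranspose_one, hS.1, Complex.star_def,
    Matrix.add_mul, Matrix.mul_add, smul_mul_smul_comm, Matrix.one_mul, Matrix.mul_one, hS.2]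
  match_scalars <;> grind

lemma sub_conj_eq_smul_mul (hS : IsHermitianInvolution S)
    (hnorm : conj α * α + conj β * β = 1) (horth : α * conj β + conj α * β = 0)
    (ρ : Matrix n n ℂ) :
    ρ - (α • 1 + β • S) * ρ * (α • 1 + β • S)ᴴ =
      conj β • ((β • 1 + α • S) * (ρ - S * ρ * Sᴴ)) := by
  have hSSX : ∀ X : Matrix n n ℂ, S * (S * X) = X := fun X => by
    rw [← Matrix.mul_assoc, hS.2, Matrix.one_mul]
  simp only [conjTranspose_add, conjTranspose_smul, conjTranspose_one, hS.1, Complex.star_def,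
    Matrix.add_mul, Matrix.mul_add, Matrix.mul_sub, Matrix.smul_mul, Matrix.mul_smul,
    smul_add, smul_sub, smul_smul, Matrix.one_mul, Matrix.mul_one, Matrix.mul_assoc, hSSX]
  match_scalars <;> grind

lemma traceNorm_sub_conj_le (hS : IsHermitianInvolution S)
    (hnorm : conj α * α + conj β * β = 1) (horth : α * conj β + conj α * β = 0)
    (ρ : Matrix n n ℂ) :
    traceNorm (ρ - (α • 1 + β • S) * ρ * (α • 1 + β • S)ᴴ) ≤ traceNorm (ρ - S * ρ * Sᴴ) := by
  have hunitary : (β • 1 + α • S)ᴴ * (β • 1 + α • S) = 1 :=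
    hS.conjTranspose_mul_self_add_smul (by linear_combination hnorm) (by linear_combination horth)
  have hβ : ‖β‖ ≤ 1 := by
    have h : ((‖α‖ ^ 2 + ‖β‖ ^ 2 : ℝ) : ℂ) = 1 := by
      push_cast
      rw [← Complex.mul_conj', ← Complex.mul_conj']
      linear_combination hnorm
    norm_cast at h
    nlinarith [norm_nonneg α, norm_nonneg β]
  rw [hS.sub_conj_eq_smul_mul hnorm horth, traceNorm_smul, traceNorm_unitary_mul hunitary,
    Complex.norm_conj]
  exact mul_le_of_le_one_left (traceNorm_nonneg _) hβ

end IsHermitianInvolution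

lemma unitary_conj_add_smul {n : Type*} [Fintype n] [DecidableEq n] {W : Matrix n n ℂ}
    (hW : W * Wᴴ = 1) (α β : ℂ) (S : Matrix n n ℂ) :
    W * (α • 1 + β • S) * Wᴴ = α • 1 + β • (W * S * Wᴴ) := by
  rw [Matrix.mul_add, Matrix.add_mul, Matrix.mul_smul, Matrix.mul_smul, Matrix.smul_mul,
    Matrix.smul_mul, Matrix.mul_one, hW]

lemma add_smul_kronecker_one {n m : Type*} [Fintype n] [DecidableEq n] [Fintype m] [DecidableEq m]
    (α β : ℂ) (S : Matrix n n ℂ) :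
    (α • 1 + β • S) ⊗ₖ (1 : Matrix m m ℂ) = α • 1 + β • (S ⊗ₖ (1 : Matrix m m ℂ)) := by
  rw [add_kronecker, smul_kronecker, smul_kronecker, one_kronecker_one]

lemma exists_unit_eigenvector {n : Type*} [Fintype n] [DecidableEq n] [Nonempty n]
    (V : Matrix n n ℂ) : ∃ (l : ℂ) (v : n → ℂ), star v ⬝ᵥ v = 1 ∧ V *ᵥ v = l • v := by
  obtain ⟨l, hl⟩ := Module.End.exists_eigenvalue (toLin' V)
  obtain ⟨v, hv⟩ := hl.exists_hasEigenvector
  obtain ⟨hre, him⟩ := Complex.pos_iff.mp (dotProduct_star_self_pos_iff.mpr hv.2)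
  have hN : star v ⬝ᵥ v = ((star v ⬝ᵥ v).re : ℂ) := Complex.ext rfl (by simp [← him])
  set t : ℝ := (√(star v ⬝ᵥ v).re)⁻¹
  refine ⟨l, (t : ℂ) • v, ?_, ?_⟩
  · have ht : t * t * (star v ⬝ᵥ v).re = 1 := by
      rw [← mul_inv, Real.mul_self_sqrt hre.le, inv_mul_cancel₀ hre.ne']
    rw [star_smul, smul_dotProduct, dotProduct_smul, hN, Complex.star_def, Complex.conj_ofReal,
      smul_eq_mul, smul_eq_mul, ← mul_assoc]
    exact_mod_cast ht
  · rw [mulVec_smul, ← toLin'_apply, hv.apply_eq_smul, smul_comm]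

lemma eq_diagonal_of_unitary_of_apply_one_zero {T : Matrix (Fin 2) (Fin 2) ℂ} (hT : Tᴴ * T = 1)
    (h10 : T 1 0 = 0) :
    T = diagonal ![T 0 0, T 1 1] ∧ conj (T 0 0) * T 0 0 = 1 ∧ conj (T 1 1) * T 1 1 = 1 := by
  have hT' : T * Tᴴ = 1 := mul_eq_one_comm.mp hT
  have e00 := congrFun (congrFun hT 0) 0
  have e11 := congrFun (congrFun hT 1) 1
  have f00 := congrFun (congrFun hT' 0) 0
  simp only [mul_apply, Fin.sum_univ_two, conjTranspose_apply, one_apply_eq, h10,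
    Complex.star_def, map_zero, zero_mul] at e00 e11 f00
  have h01 : T 0 1 = 0 := by
    have : T 0 1 * conj (T 0 1) = 0 := by linear_combination f00 - e00
    rwa [Complex.mul_conj, Complex.ofReal_eq_zero, Complex.normSq_eq_zero] at this
  refine ⟨?_, by simpa using e00, by simpa [h01] using e11⟩
  ext i j
  fin_cases i <;> fin_cases j <;> simp [h01, h10]

lemma exists_unitary_conj_diagonal_fin_two {V : Matrix (Fin 2) (Fin 2) ℂ} (hV : Vᴴ * V = 1) :
    ∃ (Q : Matrix (Fin 2) (Fin 2) ℂ) (l m : ℂ), Qᴴ * Q = 1 ∧ conj l * l = 1 ∧ conj m * m = 1 ∧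
      Qᴴ * V * Q = diagonal ![l, m] := by
  obtain ⟨l, v, hv, hVv⟩ := exists_unit_eigenvector V
  -- a unitary whose first column is the eigenvector `v`, so that `Qᴴ V Q` is upper triangular
  set Q : Matrix (Fin 2) (Fin 2) ℂ := !![v 0, -conj (v 1); v 1, conj (v 0)]
  have hQ : Qᴴ * Q = 1 := by
    simp only [dotProduct, Fin.sum_univ_two, Pi.star_apply, Complex.star_def] at hv
    ext i j
    fin_cases i <;> fin_cases j <;> simp [Q, mul_apply, Fin.sum_univ_two] <;> grind
  set T := Qᴴ * V * Q
  have hT : Tᴴ * T = 1 := by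
    simp only [T, conjTranspose_mul, conjTranspose_conjTranspose, Matrix.mul_assoc]
    rw [← Matrix.mul_assoc Q, mul_eq_one_comm.mp hQ, Matrix.one_mul, ← Matrix.mul_assoc Vᴴ, hV,
      Matrix.one_mul, hQ]
  have hVQ : ∀ i, (V * Q) i 0 = l * v i := fun i => by
    simpa [Q, mul_apply, mulVec, dotProduct, Fin.sum_univ_two] using congrFun hVv i
  have h10 : T 1 0 = 0 :=
    calc T 1 0 = -v 1 * (l * v 0) + v 0 * (l * v 1) := by
          simp [T, Q, Matrix.mul_assoc, mul_apply (M := Qᴴ), hVQ, Fin.sum_univ_two]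
      _ = 0 := by ring
  obtain ⟨hdiag, hl, hm⟩ := eq_diagonal_of_unitary_of_apply_one_zero hT h10
  exact ⟨Q, T 0 0, T 1 1, hQ, hl, hm, hdiag⟩

lemma diagonal_fin_two_eq_add_smul_pauliZ (l m : ℂ) :
    diagonal ![l, m] = ((l + m) / 2) • 1 + ((l - m) / 2) • σz := by
  ext i j
  fin_cases i <;> fin_cases j <;> simp <;> ring

lemma exists_unitary_conj_eq_add_smul_pauliZ {V : Matrix (Fin 2) (Fin 2) ℂ} (hV : Vᴴ * V = 1) :
    ∃ (Q : Matrix (Fin 2) (Fin 2) ℂ) (α β : ℂ), Qᴴ * Q = 1 ∧ conj α * α + conj β * β = 1 ∧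
      α * conj β + conj α * β = 0 ∧ Qᴴ * V * Q = α • 1 + β • σz := by
  obtain ⟨Q, l, m, hQ, hl, hm, hdiag⟩ := exists_unitary_conj_diagonal_fin_two hV
  refine ⟨Q, (l + m) / 2, (l - m) / 2, hQ, ?_, ?_,
    hdiag.trans (diagonal_fin_two_eq_add_smul_pauliZ l m)⟩
  · simp only [map_div₀, map_add, map_sub, map_ofNat]
    linear_combination (hl + hm) / 2
  · simp only [map_div₀, map_add, map_sub, map_ofNat]
    linear_combination (hl - hm) / 2

theorem harmonic_spectrum_maximizes_min_trace_distance_general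
    (d : ℕ)
    (ρ : Matrix (Fin 2 × Fin d) (Fin 2 × Fin d) ℂ)
    (V : Matrix (Fin 2) (Fin 2) ℂ) (hV : Vᴴ * V = 1) :
    sInf {r : ℝ | ∃ W : Matrix (Fin 2) (Fin 2) ℂ, Wᴴ * W = 1 ∧
        r = traceNorm (ρ - ((W * V * Wᴴ) ⊗ₖ (1 : Matrix (Fin d) (Fin d) ℂ)) * ρ *
          ((W * V * Wᴴ) ⊗ₖ (1 : Matrix (Fin d) (Fin d) ℂ))ᴴ)}
      ≤ sInf {r : ℝ | ∃ W : Matrix (Fin 2) (Fin 2) ℂ, Wᴴ * W = 1 ∧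
        r = traceNorm (ρ - ((W * !![1, 0; 0, -1] * Wᴴ) ⊗ₖ (1 : Matrix (Fin d) (Fin d) ℂ)) * ρ *
          ((W * !![1, 0; 0, -1] * Wᴴ) ⊗ₖ (1 : Matrix (Fin d) (Fin d) ℂ))ᴴ)} := by
  obtain ⟨Q, α, β, hQ, hnorm, horth, hQVQ⟩ := exists_unitary_conj_eq_add_smul_pauliZ hV
  refine le_csInf ⟨_, 1, by simp, rfl⟩ ?_
  rintro _ ⟨W, hW, rfl⟩
  have hWQ : (W * Qᴴ)ᴴ * (W * Qᴴ) = 1 := by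
    rw [conjTranspose_mul, conjTranspose_conjTranspose, Matrix.mul_assoc, ← Matrix.mul_assoc Wᴴ,
      hW, Matrix.one_mul, mul_eq_one_comm.mp hQ]
  have hconj : W * Qᴴ * V * (W * Qᴴ)ᴴ = α • 1 + β • (W * σz * Wᴴ) := by
    rw [conjTranspose_mul, conjTranspose_conjTranspose, Matrix.mul_assoc W, Matrix.mul_assoc W,
      ← Matrix.mul_assoc (Qᴴ * V), ← Matrix.mul_assoc W, hQVQ,
      unitary_conj_add_smul (mul_eq_one_comm.mp hW)]
  refine le_trans (csInf_le ⟨0, ?_⟩ ⟨W * Qᴴ, hWQ, rfl⟩) ?_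
  · rintro _ ⟨_, _, rfl⟩
    exact traceNorm_nonneg _
  rw [hconj, add_smul_kronecker_one]
  exact (isHermitianInvolution_pauliZ.unitary_conj hW).kronecker_one.traceNorm_sub_conj_le
    hnorm horth ρ

theorem harmonic_spectrum_maximizes_min_trace_distance
    (d : ℕ) (hd : 0 < d)
    (ρ : Matrix (Fin 2 × Fin d) (Fin 2 × Fin d) ℂ)
    (hρ : ρ.PosSemidef) (htr : ρ.trace = 1)
    (V : Matrix (Fin 2) (Fin 2) ℂ) (hV : Vᴴ * V = 1) :
    sInf {r : ℝ | ∃ W : Matrix (Fin 2) (Fin 2) ℂ, Wᴴ * W = 1 ∧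
        r = traceNorm (ρ - ((W * V * Wᴴ) ⊗ₖ (1 : Matrix (Fin d) (Fin d) ℂ)) * ρ *
          ((W * V * Wᴴ) ⊗ₖ (1 : Matrix (Fin d) (Fin d) ℂ))ᴴ)}
      ≤ sInf {r : ℝ | ∃ W : Matrix (Fin 2) (Fin 2) ℂ, Wᴴ * W = 1 ∧
        r = traceNorm (ρ - ((W * !![1, 0; 0, -1] * Wᴴ) ⊗ₖ (1 : Matrix (Fin d) (Fin d) ℂ)) * ρ *
          ((W * !![1, 0; 0, -1] * Wᴴ) ⊗ₖ (1 : Matrix (Fin d) (Fin d) ℂ))ᴴ)} :=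
  harmonic_spectrum_maximizes_min_trace_distance_general d ρ V hV
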